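/- arXiv:2107.05389 — 5 statements merged into one kernel-verified Lean document; each statement's English description precedes it below -/
import Mathlib

section
/- Let V be a real vector space with a nondegenerate symmetric bilinear form g of dimension n ≥ 3, let T be a symmetric bilinear form on V with trace R, and let A, B be covectors. Suppose 2(n−1){A_i T_{kl} − A_k T_{il}} = R A_i g_{kl} − R A_k g_{il} − (n−2) B_i g_{kl} + (n−2) B_k g_{il} for all i,k,l, and suppose A is non-null, i.e. A = ε α U with g(U,U) = ε = ±1 and α ≠ 0. Then B = ε β U where β = B(U); that is, B is proportional to A. -/
/-- Pointwise algebraic step in case (I): if the identity (9) holds with `A` a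
non-null covector, `A = ε α U` with `g(U,U) = ε = ±1`, `α ≠ 0`, then
`B = ε β U` with `β = B(U)`, i.e. `B` is proportional to `A`. -/
theorem nonnull_case_B_proportional
    (n : ℕ) (hn : 3 ≤ n)
    (g ginv T : Fin n → Fin n → ℝ)
    (A B Ucov Uvec : Fin n → ℝ) (R ε α : ℝ)
    (hgsymm : ∀ i j, g i j = g j i)
    (hTsymm : ∀ i j, T i j = T j i)
    (hinv : ∀ i j, ∑ k : Fin n, ginv i k * g k j = if i = j then (1:ℝ) else 0)
    (hR : R = ∑ j : Fin n, ∑ l : Fin n, ginv j l * T j l)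
    (hUcov : ∀ i, Ucov i = ∑ k : Fin n, g i k * Uvec k)
    (hUnit : ∑ i : Fin n, Ucov i * Uvec i = ε)
    (hε : ε = 1 ∨ ε = -1)
    (hα : α ≠ 0)
    (hA : ∀ i, A i = ε * α * Ucov i)
    (hmain : ∀ i k l,
      2 * ((n : ℝ) - 1) * (A i * T k l - A k * T i l)
        = R * A i * g k l - R * A k * g i l
          - ((n : ℝ) - 2) * B i * g k l + ((n : ℝ) - 2) * B k * g i l) :
    ∀ i, B i = ε * (∑ l : Fin n, Uvec l * B l) * Ucov i := by
  have hε2 : ε * ε = 1 := by rcases hε with h | h <;> rw [h] <;> norm_num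
  -- matrix facts about the inverse metric
  set M : Matrix (Fin n) (Fin n) ℝ := Matrix.of ginv with hM
  set G : Matrix (Fin n) (Fin n) ℝ := Matrix.of g with hG
  have hMG : M * G = 1 := by
    ext i j
    simpa [Matrix.mul_apply, hM, hG, Matrix.one_apply] using hinv i j
  have hGT : G.transpose = G := by
    ext i j
    simp [Matrix.transpose_apply, hG, hgsymm i j]
  have hGMt : G * M.transpose = 1 := by
    have h := congrArg Matrix.transpose hMG
    rw [Matrix.transpose_mul, Matrix.transpose_one, hGT] at h
    exact h
  have hMt : M.transpose = M := by
    calc M.transpose = (M * G) * M.transpose := by rw [hMG, one_mul]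
      _ = M * (G * M.transpose) := by rw [Matrix.mul_assoc]
      _ = M := by rw [hGMt, mul_one]
  have hsymginv : ∀ i j, ginv i j = ginv j i := by
    intro i j
    have h := congrFun (congrFun hMt j) i
    simpa [Matrix.transpose_apply, hM] using h
  -- basic contraction atoms
  have a1 : ∀ l, (∑ k, ginv k l * Ucov k) = Uvec l := by
    intro l
    calc (∑ k, ginv k l * Ucov k) = ∑ k, ginv l k * (∑ m, g k m * Uvec m) := by
          refine Finset.sum_congr rfl fun k _ => ?_
          rw [hsymginv k l, hUcov k]
      _ = ∑ m, (∑ k, ginv l k * g k m) * Uvec m := by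
          simp only [Finset.mul_sum]
          rw [Finset.sum_comm]
          refine Finset.sum_congr rfl fun m _ => ?_
          rw [Finset.sum_mul]
          exact Finset.sum_congr rfl fun k _ => by ring
      _ = Uvec l := by simp [hinv]
  have a2 : ∀ p, (∑ l, Uvec l * g p l) = Ucov p := by
    intro p
    rw [hUcov p]
    exact Finset.sum_congr rfl fun l _ => by rw [hgsymm p l]; ring
  have a3 : (∑ i, Uvec i * Ucov i) = ε := by
    rw [← hUnit]
    exact Finset.sum_congr rfl fun i _ => mul_comm _ _
  have A2 : ∀ p, (∑ k, ∑ l, ginv k l * (Ucov k * T p l)) = ∑ l, Uvec l * T p l := by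
    intro p
    rw [Finset.sum_comm]
    refine Finset.sum_congr rfl fun l _ => ?_
    rw [← a1 l, Finset.sum_mul]
    exact Finset.sum_congr rfl fun k _ => by ring
  have A3 : (∑ k, ∑ l, ginv k l * g k l) = (n : ℝ) := by
    calc (∑ k, ∑ l, ginv k l * g k l) = ∑ k : Fin n, (1:ℝ) := by
          refine Finset.sum_congr rfl fun k _ => ?_
          have h := hinv k k
          rw [if_pos rfl] at h
          rw [← h]
          exact Finset.sum_congr rfl fun l _ => by rw [hgsymm k l]
      _ = (n : ℝ) := by simp
  have A4 : ∀ (f : Fin n → ℝ) (p : Fin n),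
      (∑ k, ∑ l, ginv k l * (f k * g p l)) = f p := by
    intro f p
    calc (∑ k, ∑ l, ginv k l * (f k * g p l))
        = ∑ k, (if k = p then (1:ℝ) else 0) * f k := by
          refine Finset.sum_congr rfl fun k _ => ?_
          rw [← hinv k p, Finset.sum_mul]
          refine Finset.sum_congr rfl fun l _ => ?_
          rw [hgsymm p l]; ring
      _ = f p := by simp
  have E1 : ∀ p, (∑ i, ∑ l, (Uvec i * Ucov i) * (Uvec l * T p l))
      = ε * (∑ l, Uvec l * T p l) := by
    intro p
    rw [← Finset.sum_mul_sum, a3]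
  have E3' : ∀ p, (∑ i, ∑ l, (Uvec i * Ucov i) * (Uvec l * g p l)) = ε * Ucov p := by
    intro p
    rw [← Finset.sum_mul_sum, a3, a2]
  have E4 : (∑ i, ∑ l, Uvec i * (Uvec l * g i l)) = ε := by
    refine (Finset.sum_congr rfl fun i _ => ?_).trans a3
    rw [← Finset.mul_sum, a2 i]
  have E5 : ∀ p, (∑ i, ∑ l, (Uvec i * B i) * (Uvec l * g p l))
      = (∑ l, Uvec l * B l) * Ucov p := by
    intro p
    rw [← Finset.sum_mul_sum, a2]
  -- the main identity with A substituted
  have hmain' : ∀ i k l,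
      2 * ((n : ℝ) - 1) * (ε * α * Ucov i * T k l - ε * α * Ucov k * T i l)
        = R * (ε * α * Ucov i) * g k l - R * (ε * α * Ucov k) * g i l
          - ((n : ℝ) - 2) * B i * g k l + ((n : ℝ) - 2) * B k * g i l := by
    intro i k l
    rw [← hA i, ← hA k]
    exact hmain i k l
  -- Contraction with ginv over (k,l):
  have hC' : ∀ p, ((n:ℝ)-1) * (((n:ℝ)-2) * B p)
      = ((n:ℝ)-1) * ((ε*α) * (2 * (∑ l, Uvec l * T p l) - R * Ucov p)) := by
    intro p
    have h1 : (∑ k, ∑ l, ginv k l *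
          (2 * ((n : ℝ) - 1) * (ε * α * Ucov p * T k l - ε * α * Ucov k * T p l)))
        = ∑ k, ∑ l, ginv k l *
          (R * (ε * α * Ucov p) * g k l - R * (ε * α * Ucov k) * g p l
            - ((n : ℝ) - 2) * B p * g k l + ((n : ℝ) - 2) * B k * g p l) :=
      Finset.sum_congr rfl fun k _ => Finset.sum_congr rfl fun l _ => by rw [hmain' p k l]
    have hL : (∑ k, ∑ l, ginv k l *
          (2 * ((n : ℝ) - 1) * (ε * α * Ucov p * T k l - ε * α * Ucov k * T p l)))
        = (2*((n:ℝ)-1)*(ε*α)*Ucov p) * R - (2*((n:ℝ)-1)*(ε*α)) * (∑ l, Uvec l * T p l) := by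
      calc _ = ∑ k, ∑ l, ((2*((n:ℝ)-1)*(ε*α)*Ucov p) * (ginv k l * T k l)
                - (2*((n:ℝ)-1)*(ε*α)) * (ginv k l * (Ucov k * T p l))) :=
            Finset.sum_congr rfl fun k _ => Finset.sum_congr rfl fun l _ => by ring
        _ = (2*((n:ℝ)-1)*(ε*α)*Ucov p) * (∑ k, ∑ l, ginv k l * T k l)
              - (2*((n:ℝ)-1)*(ε*α)) * (∑ k, ∑ l, ginv k l * (Ucov k * T p l)) := by
            simp only [Finset.sum_sub_distrib, Finset.mul_sum]
        _ = _ := by rw [← hR, A2 p]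
    have hRs : (∑ k, ∑ l, ginv k l *
          (R * (ε * α * Ucov p) * g k l - R * (ε * α * Ucov k) * g p l
            - ((n : ℝ) - 2) * B p * g k l + ((n : ℝ) - 2) * B k * g p l))
        = (R*(ε*α)*Ucov p) * (n:ℝ) - (R*(ε*α)) * Ucov p
            - (((n:ℝ)-2)*B p) * (n:ℝ) + ((n:ℝ)-2) * B p := by
      calc _ = ∑ k, ∑ l, ((R*(ε*α)*Ucov p) * (ginv k l * g k l)
                - (R*(ε*α)) * (ginv k l * (Ucov k * g p l))
                - (((n:ℝ)-2)*B p) * (ginv k l * g k l)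
                + ((n:ℝ)-2) * (ginv k l * (B k * g p l))) :=
            Finset.sum_congr rfl fun k _ => Finset.sum_congr rfl fun l _ => by ring
        _ = (R*(ε*α)*Ucov p) * (∑ k, ∑ l, ginv k l * g k l)
              - (R*(ε*α)) * (∑ k, ∑ l, ginv k l * (Ucov k * g p l))
              - (((n:ℝ)-2)*B p) * (∑ k, ∑ l, ginv k l * g k l)
              + ((n:ℝ)-2) * (∑ k, ∑ l, ginv k l * (B k * g p l)) := by
            simp only [Finset.sum_add_distrib, Finset.sum_sub_distrib, Finset.mul_sum]
        _ = _ := by rw [A3, A4 Ucov p, A4 B p]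
    have h2 := hL.symm.trans (h1.trans hRs)
    linear_combination h2
  -- Contraction with Uvec ⊗ Uvec over (i,l), k = p free:
  have hE' : ∀ p, 2*((n:ℝ)-1)*α * ((∑ l, Uvec l * T p l)
        - ε * (∑ i, ∑ l, Uvec i * (Uvec l * T i l)) * Ucov p)
      = ((n:ℝ)-2) * (ε * B p - (∑ l, Uvec l * B l) * Ucov p) := by
    intro p
    have h1 : (∑ i, ∑ l, Uvec i * (Uvec l *
          (2 * ((n : ℝ) - 1) * (ε * α * Ucov i * T p l - ε * α * Ucov p * T i l))))
        = ∑ i, ∑ l, Uvec i * (Uvec l *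
          (R * (ε * α * Ucov i) * g p l - R * (ε * α * Ucov p) * g i l
            - ((n : ℝ) - 2) * B i * g p l + ((n : ℝ) - 2) * B p * g i l)) :=
      Finset.sum_congr rfl fun i _ => Finset.sum_congr rfl fun l _ => by rw [hmain' i p l]
    have hL : (∑ i, ∑ l, Uvec i * (Uvec l *
          (2 * ((n : ℝ) - 1) * (ε * α * Ucov i * T p l - ε * α * Ucov p * T i l))))
        = (2*((n:ℝ)-1)*(ε*α)) * (ε * (∑ l, Uvec l * T p l))
            - (2*((n:ℝ)-1)*(ε*α)*Ucov p) * (∑ i, ∑ l, Uvec i * (Uvec l * T i l)) := by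
      calc _ = ∑ i, ∑ l, ((2*((n:ℝ)-1)*(ε*α)) * ((Uvec i * Ucov i) * (Uvec l * T p l))
                - (2*((n:ℝ)-1)*(ε*α)*Ucov p) * (Uvec i * (Uvec l * T i l))) :=
            Finset.sum_congr rfl fun i _ => Finset.sum_congr rfl fun l _ => by ring
        _ = (2*((n:ℝ)-1)*(ε*α)) * (∑ i, ∑ l, (Uvec i * Ucov i) * (Uvec l * T p l))
              - (2*((n:ℝ)-1)*(ε*α)*Ucov p) * (∑ i, ∑ l, Uvec i * (Uvec l * T i l)) := by
            simp only [Finset.sum_sub_distrib, Finset.mul_sum]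
        _ = _ := by rw [E1 p]
    have hRs : (∑ i, ∑ l, Uvec i * (Uvec l *
          (R * (ε * α * Ucov i) * g p l - R * (ε * α * Ucov p) * g i l
            - ((n : ℝ) - 2) * B i * g p l + ((n : ℝ) - 2) * B p * g i l)))
        = (R*(ε*α)) * (ε * Ucov p) - (R*(ε*α)*Ucov p) * ε
            - ((n:ℝ)-2) * ((∑ l, Uvec l * B l) * Ucov p) + (((n:ℝ)-2)*B p) * ε := by
      calc _ = ∑ i, ∑ l, ((R*(ε*α)) * ((Uvec i * Ucov i) * (Uvec l * g p l))
                - (R*(ε*α)*Ucov p) * (Uvec i * (Uvec l * g i l))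
                - ((n:ℝ)-2) * ((Uvec i * B i) * (Uvec l * g p l))
                + (((n:ℝ)-2)*B p) * (Uvec i * (Uvec l * g i l))) :=
            Finset.sum_congr rfl fun i _ => Finset.sum_congr rfl fun l _ => by ring
        _ = (R*(ε*α)) * (∑ i, ∑ l, (Uvec i * Ucov i) * (Uvec l * g p l))
              - (R*(ε*α)*Ucov p) * (∑ i, ∑ l, Uvec i * (Uvec l * g i l))
              - ((n:ℝ)-2) * (∑ i, ∑ l, (Uvec i * B i) * (Uvec l * g p l))
              + (((n:ℝ)-2)*B p) * (∑ i, ∑ l, Uvec i * (Uvec l * g i l)) := by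
            simp only [Finset.sum_add_distrib, Finset.sum_sub_distrib, Finset.mul_sum]
        _ = _ := by rw [E3' p, E4, E5 p]
    have h2 := hL.symm.trans (h1.trans hRs)
    linear_combination h2 - 2*((n:ℝ)-1)*α*(∑ l, Uvec l * T p l) * hε2
  -- Contraction of hC' with Uvec over p:
  have hF' : ((n:ℝ)-1) * (((n:ℝ)-2) * (∑ l, Uvec l * B l))
      = ((n:ℝ)-1) * (2*(ε*α) * (∑ i, ∑ l, Uvec i * (Uvec l * T i l)) - α*R) := by
    have h1 : (∑ p, Uvec p * (((n:ℝ)-1) * (((n:ℝ)-2) * B p)))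
        = ∑ p, Uvec p * (((n:ℝ)-1) * ((ε*α) * (2 * (∑ l, Uvec l * T p l) - R * Ucov p))) :=
      Finset.sum_congr rfl fun p _ => by rw [hC' p]
    have hL : (∑ p, Uvec p * (((n:ℝ)-1) * (((n:ℝ)-2) * B p)))
        = (((n:ℝ)-1)*((n:ℝ)-2)) * (∑ l, Uvec l * B l) := by
      calc _ = ∑ p, (((n:ℝ)-1)*((n:ℝ)-2)) * (Uvec p * B p) :=
            Finset.sum_congr rfl fun p _ => by ring
        _ = _ := by rw [← Finset.mul_sum]
    have hRs : (∑ p, Uvec p * (((n:ℝ)-1) * ((ε*α) * (2 * (∑ l, Uvec l * T p l) - R * Ucov p))))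
        = (2*((n:ℝ)-1)*(ε*α)) * (∑ i, ∑ l, Uvec i * (Uvec l * T i l))
            - (((n:ℝ)-1)*(ε*α)*R) * ε := by
      calc _ = ∑ p, ((2*((n:ℝ)-1)*(ε*α)) * (Uvec p * (∑ l, Uvec l * T p l))
                - (((n:ℝ)-1)*(ε*α)*R) * (Uvec p * Ucov p)) :=
            Finset.sum_congr rfl fun p _ => by ring
        _ = (2*((n:ℝ)-1)*(ε*α)) * (∑ p, Uvec p * (∑ l, Uvec l * T p l))
              - (((n:ℝ)-1)*(ε*α)*R) * (∑ p, Uvec p * Ucov p) := by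
            rw [Finset.sum_sub_distrib, Finset.mul_sum, Finset.mul_sum]
        _ = (2*((n:ℝ)-1)*(ε*α)) * (∑ i, ∑ l, Uvec i * (Uvec l * T i l))
              - (((n:ℝ)-1)*(ε*α)*R) * (∑ p, Uvec p * Ucov p) := by
            rw [Finset.sum_congr rfl fun i (_ : i ∈ Finset.univ) => (Finset.mul_sum Finset.univ (fun l => Uvec l * T i l) (Uvec i))]
        _ = _ := by rw [a3]
    have h2 := hL.symm.trans (h1.trans hRs)
    linear_combination h2 - ((n:ℝ)-1)*α*R * hε2
  -- final combination
  intro p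
  have key : ((n:ℝ)-2)^2 * (B p - ε * (∑ l, Uvec l * B l) * Ucov p) = 0 := by
    linear_combination ε * hE' p + hC' p - ε * Ucov p * hF' + ((n:ℝ)-2) * B p * hε2
  have h4 : (3:ℝ) ≤ (n:ℝ) := by exact_mod_cast hn
  have h3 : ((n:ℝ)-2)^2 ≠ 0 := pow_ne_zero 2 (by intro h; nlinarith)
  have h5 := (mul_eq_zero.mp key).resolve_left h3
  linarith [h5]
end

section
/- Let V be a real vector space of dimension n ≥ 3 with nondegenerate symmetric bilinear form g, T a symmetric bilinear form with trace R, U a vector with g(U,U) = ε = ±1, and λ a scalar. Suppose the identity 2(n−1)ε α {U_i T_{kl} − U_k T_{il}} = ε α R (U_i g_{kl} − U_k g_{il}) − (n−2) ε β (U_i g_{kl} − U_k g_{il}) holds with α ≠ 0 and β = λα. Then 2(n−1) T_{kl} = (R − (n−2)λ) g_{kl} + (n−2)(R + nλ) ε U_k U_l. -/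
/-- Pointwise derivation of equation (12): in the non-null case with `α ≠ 0`,
`β = λα` and `g(U,U) = ε = ±1`, the identity (9b) determines the Ricci-type
tensor `T` completely:
`2(n−1) T_{kl} = (R − (n−2)λ) g_{kl} + (n−2)(R + nλ) ε U_k U_l`. -/
theorem nonnull_case_ricci_formula
    (n : ℕ) (hn : 3 ≤ n)
    (g ginv T : Fin n → Fin n → ℝ)
    (Ucov Uvec : Fin n → ℝ) (R ε α β lam : ℝ)
    (hgsymm : ∀ i j, g i j = g j i)
    (hTsymm : ∀ i j, T i j = T j i)
    (hinv : ∀ i j, ∑ k : Fin n, ginv i k * g k j = if i = j then (1:ℝ) else 0)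
    (hR : R = ∑ j : Fin n, ∑ l : Fin n, ginv j l * T j l)
    (hUcov : ∀ i, Ucov i = ∑ k : Fin n, g i k * Uvec k)
    (hUnit : ∑ i : Fin n, Ucov i * Uvec i = ε)
    (hε : ε = 1 ∨ ε = -1)
    (hα : α ≠ 0)
    (hβ : β = lam * α)
    (hmain : ∀ i k l,
      2 * ((n : ℝ) - 1) * ε * α * (Ucov i * T k l - Ucov k * T i l)
        = ε * α * R * (Ucov i * g k l - Ucov k * g i l)
          - ((n : ℝ) - 2) * ε * β * (Ucov i * g k l - Ucov k * g i l)) :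
    ∀ k l, 2 * ((n : ℝ) - 1) * T k l
      = (R - ((n : ℝ) - 2) * lam) * g k l
        + ((n : ℝ) - 2) * (R + (n : ℝ) * lam) * ε * Ucov k * Ucov l := by
  have hε2 : ε * ε = 1 := by rcases hε with h | h <;> simp [h]
  have hεne : ε ≠ 0 := by rcases hε with h | h <;> simp [h]
  have hn3 : (3:ℝ) ≤ (n:ℝ) := by exact_mod_cast hn
  have hn1 : (2*((n:ℝ)-1)) ≠ 0 := by nlinarith
  set c : ℝ := R - ((n:ℝ)-2)*lam with hc
  have hmain' : ∀ i k l, 2*((n:ℝ)-1)*(Ucov i * T k l - Ucov k * T i l)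
      = c * (Ucov i * g k l - Ucov k * g i l) := by
    intro i k l
    apply mul_left_cancel₀ (mul_ne_zero hεne hα)
    linear_combination hmain i k l - ((n:ℝ)-2)*ε*(Ucov i * g k l - Ucov k * g i l)*hβ
  set S : Fin n → ℝ := fun l => ∑ i, Uvec i * T i l with hS
  have hUU : ∑ i, Uvec i * Ucov i = ε := by
    rw [← hUnit]; exact Finset.sum_congr rfl (fun i _ => mul_comm _ _)
  have eqA : ∀ k l, 2*((n:ℝ)-1)*(ε * T k l - Ucov k * S l)
      = c * (ε * g k l - Ucov k * Ucov l) := by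
    intro k l
    have h : ∑ i, Uvec i * (2*((n:ℝ)-1)*(Ucov i * T k l - Ucov k * T i l))
        = ∑ i, Uvec i * (c * (Ucov i * g k l - Ucov k * g i l)) :=
      Finset.sum_congr rfl (fun i _ => by rw [hmain' i k l])
    have hUgl : ∑ i, Uvec i * g i l = Ucov l := by
      rw [hUcov l]; exact Finset.sum_congr rfl (fun i _ => by rw [hgsymm]; ring)
    have e1 : ∑ i, Uvec i * (2*((n:ℝ)-1)*(Ucov i * T k l - Ucov k * T i l))
        = 2*((n:ℝ)-1)*((∑ i, Uvec i * Ucov i) * T k l - Ucov k * S l) := by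
      rw [hS]
      simp only [Finset.sum_mul, Finset.mul_sum, ← Finset.sum_sub_distrib]
      exact Finset.sum_congr rfl (fun i _ => by ring)
    have e2 : ∑ i, Uvec i * (c * (Ucov i * g k l - Ucov k * g i l))
        = c * ((∑ i, Uvec i * Ucov i) * g k l - Ucov k * (∑ i, Uvec i * g i l)) := by
      simp only [Finset.sum_mul, Finset.mul_sum, ← Finset.sum_sub_distrib]
      exact Finset.sum_congr rfl (fun i _ => by ring)
    rw [e1, e2, hUU, hUgl] at h
    linear_combination h
  have hsym : ∀ k l, Ucov k * S l = Ucov l * S k := by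
    intro k l
    apply mul_left_cancel₀ hn1
    have h1 := eqA k l
    have h2 := eqA l k
    rw [hTsymm l k, hgsymm l k] at h2
    linear_combination h2 - h1
  set σ : ℝ := ∑ k, Uvec k * S k with hσ
  have hSform : ∀ l, ε * S l = σ * Ucov l := by
    intro l
    have h : ∑ k, Uvec k * (Ucov k * S l) = ∑ k, Uvec k * (Ucov l * S k) :=
      Finset.sum_congr rfl (fun k _ => by rw [hsym k l])
    have e1 : ∑ k, Uvec k * (Ucov k * S l) = (∑ k, Uvec k * Ucov k) * S l := by
      rw [Finset.sum_mul]; exact Finset.sum_congr rfl (fun k _ => by ring)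
    have e2 : ∑ k, Uvec k * (Ucov l * S k) = Ucov l * σ := by
      rw [hσ, Finset.mul_sum]; exact Finset.sum_congr rfl (fun k _ => by ring)
    rw [e1, e2, hUU] at h
    linear_combination h
  have eqB : ∀ k l, 2*((n:ℝ)-1)*T k l
      = c * g k l + (2*((n:ℝ)-1)*σ - ε*c) * (Ucov k * Ucov l) := by
    intro k l
    have h := eqA k l
    have h2 := hSform l
    linear_combination ε*h + 2*((n:ℝ)-1)*Ucov k*h2
      - (2*((n:ℝ)-1)*T k l - c*g k l) * hε2
  -- trace identities
  have hginvU : ∀ j, ∑ l, ginv j l * Ucov l = Uvec j := by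
    intro j
    calc ∑ l, ginv j l * Ucov l
        = ∑ l, ∑ m, ginv j l * g l m * Uvec m := by
          refine Finset.sum_congr rfl (fun l _ => ?_)
          rw [hUcov l, Finset.mul_sum]
          exact Finset.sum_congr rfl (fun m _ => by ring)
      _ = ∑ m, (∑ l, ginv j l * g l m) * Uvec m := by
          rw [Finset.sum_comm]
          exact Finset.sum_congr rfl (fun m _ => by rw [Finset.sum_mul])
      _ = Uvec j := by simp [hinv]
  have htrg : ∑ j, ∑ l, ginv j l * g j l = (n:ℝ) := by
    have : ∀ j : Fin n, ∑ l, ginv j l * g j l = 1 := by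
      intro j
      have h := hinv j j
      simp only [if_pos] at h
      rw [← h]
      exact Finset.sum_congr rfl (fun l _ => by rw [hgsymm j l])
    simp [this]
  have htrU : ∑ j, ∑ l, ginv j l * (Ucov j * Ucov l) = ε := by
    calc ∑ j, ∑ l, ginv j l * (Ucov j * Ucov l)
        = ∑ j, Ucov j * (∑ l, ginv j l * Ucov l) := by
          refine Finset.sum_congr rfl (fun j _ => ?_)
          rw [Finset.mul_sum]
          exact Finset.sum_congr rfl (fun l _ => by ring)
      _ = ∑ j, Ucov j * Uvec j := by
          exact Finset.sum_congr rfl (fun j _ => by rw [hginvU j])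
      _ = ε := hUnit
  have htrace : 2*((n:ℝ)-1)*R = c*(n:ℝ) + (2*((n:ℝ)-1)*σ - ε*c)*ε := by
    have h1 : 2*((n:ℝ)-1)*R = ∑ j, ∑ l, ginv j l * (2*((n:ℝ)-1) * T j l) := by
      rw [hR, Finset.mul_sum]
      refine Finset.sum_congr rfl (fun j _ => ?_)
      rw [Finset.mul_sum]
      exact Finset.sum_congr rfl (fun l _ => by ring)
    have h2 : ∑ j, ∑ l, ginv j l * (2*((n:ℝ)-1) * T j l)
        = c * (∑ j, ∑ l, ginv j l * g j l)
          + (2*((n:ℝ)-1)*σ - ε*c) * (∑ j, ∑ l, ginv j l * (Ucov j * Ucov l)) := by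
      simp only [Finset.mul_sum, ← Finset.sum_add_distrib]
      refine Finset.sum_congr rfl (fun j _ => Finset.sum_congr rfl (fun l _ => ?_))
      rw [eqB j l]; ring
    rw [h1, h2, htrg, htrU]
  intro k l
  have h := eqB k l
  linear_combination h - ε*(Ucov k * Ucov l)*htrace
    - (2*((n:ℝ)-1)*σ - c*ε)*(Ucov k*Ucov l)*hε2
end

section
/- Let V be an n-dimensional real vector space (n ≥ 3) with nondegenerate symmetric bilinear form g, T a symmetric bilinear form, λ a scalar, and A a nonzero lightlike covector. Suppose A_i T_{kl} − A_k T_{il} = λ (A_i g_{kl} − A_k g_{il}) for all i,k,l. Then T_{kl} = λ g_{kl} + τ A_k A_l, where τ = T(K,K) for any lightlike vector K with A(K) = A_i K^i = −1. -/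
/-- Equation (34): in the lightlike case, the identity
`A_i T_{kl} − A_k T_{il} = λ(A_i g_{kl} − A_k g_{il})` determines
`T_{kl} = λ g_{kl} + τ A_k A_l` with `τ = T(K,K)` for a lightlike vector `K`
with `A(K) = −1`. -/
theorem lightlike_case_ricci_formula
    (n : ℕ) (hn : 3 ≤ n)
    (g ginv T : Fin n → Fin n → ℝ)
    (A K : Fin n → ℝ) (lam : ℝ)
    (hgsymm : ∀ i j, g i j = g j i)
    (hTsymm : ∀ i j, T i j = T j i)
    (hinv : ∀ i j, ∑ k : Fin n, ginv i k * g k j = if i = j then (1:ℝ) else 0)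
    -- `A` is lightlike and nonzero:
    (hAnull : ∑ i : Fin n, (∑ k : Fin n, ginv i k * A k) * A i = 0)
    (hAne : A ≠ 0)
    -- `K` is a lightlike vector with `A(K) = −1`:
    (hKnull : ∑ k : Fin n, ∑ l : Fin n, g k l * K k * K l = 0)
    (hAK : ∑ i : Fin n, A i * K i = -1)
    (hmain : ∀ i k l, A i * T k l - A k * T i l
        = lam * (A i * g k l - A k * g i l)) :
    ∀ k l, T k l = lam * g k l
      + (∑ i : Fin n, ∑ j : Fin n, K i * K j * T i j) * A k * A l := by
  classical
  set B : Fin n → ℝ := fun l => lam * (∑ i : Fin n, K i * g i l)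
      - (∑ i : Fin n, K i * T i l) with hB
  have key : ∀ k l, T k l = lam * g k l + A k * B l := by
    intro k l
    have hsum : ∑ i : Fin n, K i * (A i * T k l - A k * T i l)
        = ∑ i : Fin n, K i * (lam * (A i * g k l - A k * g i l)) :=
      Finset.sum_congr rfl fun i _ => by rw [hmain i k l]
    have L : ∑ i : Fin n, K i * (A i * T k l - A k * T i l)
        = (-1) * T k l - A k * (∑ i : Fin n, K i * T i l) := by
      have : ∑ i : Fin n, K i * (A i * T k l - A k * T i l)
          = (∑ i : Fin n, A i * K i) * T k l
            - A k * (∑ i : Fin n, K i * T i l) := by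
        rw [Finset.sum_mul, Finset.mul_sum, ← Finset.sum_sub_distrib]
        exact Finset.sum_congr rfl fun i _ => by ring
      rw [this, hAK]
    have R : ∑ i : Fin n, K i * (lam * (A i * g k l - A k * g i l))
        = lam * ((-1) * g k l - A k * (∑ i : Fin n, K i * g i l)) := by
      have : ∑ i : Fin n, K i * (lam * (A i * g k l - A k * g i l))
          = lam * ((∑ i : Fin n, A i * K i) * g k l
            - A k * (∑ i : Fin n, K i * g i l)) := by
        rw [mul_sub, Finset.sum_mul, Finset.mul_sum, Finset.mul_sum,
          Finset.mul_sum, ← Finset.sum_sub_distrib]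
        exact Finset.sum_congr rfl fun i _ => by ring
      rw [this, hAK]
    rw [L, R] at hsum
    simp only [hB]
    linear_combination -hsum
  have hsym : ∀ k l, A k * B l = A l * B k := by
    intro k l
    have h1 := key k l
    have h2 := key l k
    rw [hTsymm k l, hgsymm k l] at h1
    linarith
  obtain ⟨k0, hk0⟩ : ∃ k0, A k0 ≠ 0 := by
    by_contra h
    push_neg at h
    exact hAne (funext h)
  set c := B k0 / A k0 with hc
  have hBc : ∀ l, B l = c * A l := by
    intro l
    rw [hc]
    field_simp
    linarith [hsym k0 l]
  have htau : (∑ i : Fin n, ∑ j : Fin n, K i * K j * T i j) = c := by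
    have e1 : ∀ i j, K i * K j * T i j
        = lam * (g i j * K i * K j) + (A i * K i) * ((A j * K j) * c) := by
      intro i j
      rw [key i j, hBc j]
      ring
    calc ∑ i : Fin n, ∑ j : Fin n, K i * K j * T i j
        = ∑ i : Fin n, ∑ j : Fin n,
            (lam * (g i j * K i * K j) + (A i * K i) * ((A j * K j) * c)) :=
          Finset.sum_congr rfl fun i _ => Finset.sum_congr rfl fun j _ => e1 i j
      _ = lam * (∑ i : Fin n, ∑ j : Fin n, g i j * K i * K j)
            + (∑ i : Fin n, A i * K i) * ((∑ j : Fin n, A j * K j) * c) := by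
          simp only [Finset.sum_add_distrib, Finset.mul_sum, Finset.sum_mul]
          congr 1
          exact Finset.sum_congr rfl fun i _ =>
            Finset.sum_congr rfl fun j _ => by ring
      _ = c := by rw [hKnull, hAK]; ring
  intro k l
  rw [key k l, hBc l, htau]
  ring
end

section
/- Let V be an n-dimensional real vector space (n ≥ 3) with nondegenerate symmetric bilinear form g, let A be a lightlike covector and K a lightlike vector with A(K) = −1, and let λ ≠ 0. Then the identity −A_j A_i K_h + A_j A_h K_i = −g_{ij} A_h + g_{hj} A_i for all h,i,j is impossible. -/
/-- The final contradiction in case (II): for `n ≥ 3`, a lightlike covector `A`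
and a lightlike vector `K` with `A(K) = −1`, and `λ ≠ 0`, the identity
`−A_j A_i K_h + A_j A_h K_i = −g_{ij} A_h + g_{hj} A_i` (for all `h, i, j`)
is impossible (transvecting with `K^h` and `g^{ij}` yields `1 = n − 1`). -/
theorem lightlike_case_contradiction
    (n : ℕ) (hn : 3 ≤ n)
    (g ginv : Fin n → Fin n → ℝ)
    (A K : Fin n → ℝ) (lam : ℝ)
    (hgsymm : ∀ i j, g i j = g j i)
    (hinv : ∀ i j, ∑ k : Fin n, ginv i k * g k j = if i = j then (1:ℝ) else 0)
    -- `A` is lightlike: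
    (hAnull : ∑ i : Fin n, (∑ m : Fin n, ginv i m * A m) * A i = 0)
    -- `K` is a lightlike vector with `A(K) = −1`:
    (hKnull : ∑ i : Fin n, ∑ j : Fin n, g i j * K i * K j = 0)
    (hAK : ∑ i : Fin n, A i * K i = -1)
    (hlam : lam ≠ 0) :
    ¬ (∀ h i j : Fin n,
        -(A j * A i * (∑ m : Fin n, g h m * K m))
          + A j * A h * (∑ m : Fin n, g i m * K m)
        = -(g i j * A h) + g h j * A i) := by
  intro H
  set S : Fin n → ℝ := fun i => ∑ m : Fin n, g i m * K m with hS
  -- `ginv` is also a right inverse of `g`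
  have hinv' : ∀ i j, ∑ k : Fin n, g i k * ginv k j = if i = j then (1:ℝ) else 0 := by
    have h1 : (Matrix.of ginv) * (Matrix.of g) = 1 := by
      ext i j
      simpa [Matrix.mul_apply, Matrix.one_apply] using hinv i j
    have h2 : (Matrix.of g) * (Matrix.of ginv) = 1 := mul_eq_one_comm.mp h1
    intro i j
    have := congrFun (congrFun h2 i) j
    simpa [Matrix.mul_apply, Matrix.one_apply] using this
  have hK0 : ∑ h : Fin n, K h * S h = 0 := by
    calc ∑ h : Fin n, K h * S h = ∑ h : Fin n, ∑ m : Fin n, g h m * K h * K m := by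
          refine Finset.sum_congr rfl fun h _ => ?_
          rw [hS, Finset.mul_sum]
          exact Finset.sum_congr rfl fun m _ => by ring
      _ = 0 := hKnull
  have hKA : ∑ h : Fin n, K h * A h = -1 := by
    rw [← hAK]; exact Finset.sum_congr rfl fun _ _ => mul_comm _ _
  -- transvection with K^h
  have star : ∀ i j : Fin n, -(A j * S i) = g i j + A i * (∑ h : Fin n, g h j * K h) := by
    intro i j
    have hsum : ∑ h : Fin n, K h * (-(A j * A i * S h) + A j * A h * S i)
        = ∑ h : Fin n, K h * (-(g i j * A h) + g h j * A i) :=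
      Finset.sum_congr rfl fun h _ => by rw [H h i j]
    have lhs_eq : ∑ h : Fin n, K h * (-(A j * A i * S h) + A j * A h * S i)
        = -(A j * A i) * (∑ h : Fin n, K h * S h)
          + (A j * S i) * (∑ h : Fin n, K h * A h) := by
      rw [Finset.mul_sum, Finset.mul_sum, ← Finset.sum_add_distrib]
      exact Finset.sum_congr rfl fun h _ => by ring
    have rhs_eq : ∑ h : Fin n, K h * (-(g i j * A h) + g h j * A i)
        = -(g i j) * (∑ h : Fin n, K h * A h)
          + A i * (∑ h : Fin n, g h j * K h) := by
      rw [Finset.mul_sum, Finset.mul_sum, ← Finset.sum_add_distrib]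
      exact Finset.sum_congr rfl fun h _ => by ring
    rw [lhs_eq, rhs_eq, hK0, hKA] at hsum
    linarith [hsum]
  -- contractions with ginv
  have hGinvS : ∀ j : Fin n, ∑ i : Fin n, ginv j i * S i = K j := by
    intro j
    calc ∑ i : Fin n, ginv j i * S i
        = ∑ i : Fin n, ∑ m : Fin n, ginv j i * g i m * K m := by
          refine Finset.sum_congr rfl fun i _ => ?_
          rw [hS, Finset.mul_sum]
          exact Finset.sum_congr rfl fun m _ => by ring
      _ = ∑ m : Fin n, (∑ i : Fin n, ginv j i * g i m) * K m := by
          rw [Finset.sum_comm]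
          exact Finset.sum_congr rfl fun m _ => (Finset.sum_mul _ _ _).symm
      _ = ∑ m : Fin n, (if j = m then (1:ℝ) else 0) * K m := by
          refine Finset.sum_congr rfl fun m _ => ?_
          rw [hinv j m]
      _ = K j := by simp
  have hGinvT : ∀ i : Fin n, ∑ j : Fin n, ginv j i * (∑ h : Fin n, g h j * K h) = K i := by
    intro i
    calc ∑ j : Fin n, ginv j i * (∑ h : Fin n, g h j * K h)
        = ∑ j : Fin n, ∑ h : Fin n, g h j * ginv j i * K h := by
          refine Finset.sum_congr rfl fun j _ => ?_
          rw [Finset.mul_sum]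
          exact Finset.sum_congr rfl fun h _ => by ring
      _ = ∑ h : Fin n, (∑ j : Fin n, g h j * ginv j i) * K h := by
          rw [Finset.sum_comm]
          exact Finset.sum_congr rfl fun h _ => (Finset.sum_mul _ _ _).symm
      _ = ∑ h : Fin n, (if h = i then (1:ℝ) else 0) * K h := by
          refine Finset.sum_congr rfl fun h _ => ?_
          rw [hinv' h i]
      _ = K i := by simp
  have big : ∑ j : Fin n, ∑ i : Fin n, ginv j i * (-(A j * S i))
      = ∑ j : Fin n, ∑ i : Fin n, ginv j i * (g i j + A i * (∑ h : Fin n, g h j * K h)) := by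
    refine Finset.sum_congr rfl fun j _ => Finset.sum_congr rfl fun i _ => ?_
    rw [star i j]
  have lhs_val : ∑ j : Fin n, ∑ i : Fin n, ginv j i * (-(A j * S i)) = 1 := by
    calc ∑ j : Fin n, ∑ i : Fin n, ginv j i * (-(A j * S i))
        = ∑ j : Fin n, -(A j * (∑ i : Fin n, ginv j i * S i)) := by
          refine Finset.sum_congr rfl fun j _ => ?_
          rw [Finset.mul_sum, ← Finset.sum_neg_distrib]
          exact Finset.sum_congr rfl fun i _ => by ring
      _ = ∑ j : Fin n, -(A j * K j) := by
          refine Finset.sum_congr rfl fun j _ => by rw [hGinvS j]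
      _ = -(∑ j : Fin n, A j * K j) := by rw [Finset.sum_neg_distrib]
      _ = 1 := by rw [hAK]; norm_num
  have rhs_val : ∑ j : Fin n, ∑ i : Fin n, ginv j i * (g i j + A i * (∑ h : Fin n, g h j * K h))
      = (n : ℝ) - 1 := by
    have split : ∑ j : Fin n, ∑ i : Fin n, ginv j i * (g i j + A i * (∑ h : Fin n, g h j * K h))
        = (∑ j : Fin n, ∑ i : Fin n, ginv j i * g i j)
          + ∑ j : Fin n, ∑ i : Fin n, ginv j i * (A i * (∑ h : Fin n, g h j * K h)) := by
      rw [← Finset.sum_add_distrib]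
      refine Finset.sum_congr rfl fun j _ => ?_
      rw [← Finset.sum_add_distrib]
      exact Finset.sum_congr rfl fun i _ => by ring
    have t1 : ∑ j : Fin n, ∑ i : Fin n, ginv j i * g i j = (n : ℝ) := by
      calc ∑ j : Fin n, ∑ i : Fin n, ginv j i * g i j
          = ∑ j : Fin n, (if j = j then (1:ℝ) else 0) := by
            refine Finset.sum_congr rfl fun j _ => hinv j j
        _ = (n : ℝ) := by simp
    have t2 : ∑ j : Fin n, ∑ i : Fin n, ginv j i * (A i * (∑ h : Fin n, g h j * K h)) = -1 := by
      calc ∑ j : Fin n, ∑ i : Fin n, ginv j i * (A i * (∑ h : Fin n, g h j * K h))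
          = ∑ i : Fin n, A i * (∑ j : Fin n, ginv j i * (∑ h : Fin n, g h j * K h)) := by
            rw [Finset.sum_comm]
            refine Finset.sum_congr rfl fun i _ => ?_
            rw [Finset.mul_sum]
            exact Finset.sum_congr rfl fun j _ => by ring
        _ = ∑ i : Fin n, A i * K i := by
            refine Finset.sum_congr rfl fun i _ => by rw [hGinvT i]
        _ = -1 := hAK
    rw [split, t1, t2]; ring
  rw [lhs_val, rhs_val] at big
  have hn' : (3 : ℝ) ≤ (n : ℝ) := by exact_mod_cast hn
  linarith
end

section
/- Let (M,g) be a conformally flat pseudo-Riemannian manifold of dimension n ≥ 3 satisfying ∇_i R_{jl} = A_i R_{jl} + B_i g_{jl}. Then 2(n−1)(A_i R_{kl} − A_k R_{il}) = R A_i g_{kl} − R A_k g_{il} − (n−2) B_i g_{kl} + (n−2) B_k g_{il}. -/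
/-- Equation (9): a conformally flat pseudo-Riemannian manifold of dimension
`n ≥ 3` satisfying the generalized Ricci recurrence
`∇_i R_{jl} = A_i R_{jl} + B_i g_{jl}` satisfies
`2(n−1)(A_i R_{kl} − A_k R_{il})
  = R A_i g_{kl} − R A_k g_{il} − (n−2) B_i g_{kl} + (n−2) B_k g_{il}`. -/
theorem conformally_flat_GRn_key_identity
    (M : Type*) (n : ℕ) (hn : 3 ≤ n)
    (g ginv Ric : M → Fin n → Fin n → ℝ)
    (nablaRic : M → Fin n → Fin n → Fin n → ℝ)  -- `nablaRic x i j l = ∇_i R_{jl}`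
    (Riem : M → Fin n → Fin n → Fin n → Fin n → ℝ)
    (A B : M → Fin n → ℝ) (R : M → ℝ) (nablaR : M → Fin n → ℝ)
    (hgsymm : ∀ x i j, g x i j = g x j i)
    (hricsymm : ∀ x j l, Ric x j l = Ric x l j)
    (hinv : ∀ x i j, ∑ k : Fin n, ginv x i k * g x k j = if i = j then (1:ℝ) else 0)
    (hR : ∀ x, R x = ∑ j : Fin n, ∑ l : Fin n, ginv x j l * Ric x j l)
    (hnablaR : ∀ x i, nablaR x i = ∑ j : Fin n, ∑ l : Fin n, ginv x j l * nablaRic x i j l)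
    -- generalized Ricci recurrence:
    (hrec : ∀ x i j l, nablaRic x i j l = A x i * Ric x j l + B x i * g x j l)
    -- conformal flatness (vanishing Weyl tensor, equation (2)):
    (hCF : ∀ x l i j k, Riem x l i j k
        = (Ric x k i * (if l = j then (1:ℝ) else 0) - Ric x j i * (if l = k then (1:ℝ) else 0)
            + g x k i * (∑ m : Fin n, ginv x l m * Ric x m j)
            - g x j i * (∑ m : Fin n, ginv x l m * Ric x m k)) / ((n : ℝ) - 2)
          - (R x / (((n : ℝ) - 1) * ((n : ℝ) - 2)))
            * (g x k i * (if l = j then (1:ℝ) else 0) - g x j i * (if l = k then (1:ℝ) else 0)))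
    -- its divergence, the Codazzi-type deviation (3):
    (hCodazzi : ∀ x i j k, nablaRic x j i k - nablaRic x k i j
        = (1 / (2 * ((n : ℝ) - 1))) * (nablaR x j * g x k i - nablaR x k * g x j i)) :
    ∀ x i k l, 2 * ((n : ℝ) - 1) * (A x i * Ric x k l - A x k * Ric x i l)
      = R x * A x i * g x k l - R x * A x k * g x i l
        - ((n : ℝ) - 2) * B x i * g x k l + ((n : ℝ) - 2) * B x k * g x i l := by
  intro x i k l
  have hn3 : (3:ℝ) ≤ (n:ℝ) := by exact_mod_cast hn
  have hne : ((n:ℝ) - 1) ≠ 0 := by linarith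
  -- trace of g with ginv is n
  have htr : (∑ j : Fin n, ∑ m : Fin n, ginv x j m * g x j m) = (n : ℝ) := by
    have h1 : ∀ j : Fin n, (∑ m : Fin n, ginv x j m * g x j m) = 1 := by
      intro j
      have := hinv x j j
      simp only [if_pos rfl] at this
      calc (∑ m : Fin n, ginv x j m * g x j m)
          = ∑ m : Fin n, ginv x j m * g x m j := by
            refine Finset.sum_congr rfl fun m _ => by rw [hgsymm]
        _ = 1 := this
    simp [h1]
  -- nablaR = R A + n B
  have hnR : ∀ i', nablaR x i' = R x * A x i' + (n : ℝ) * B x i' := by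
    intro i'
    rw [hnablaR]
    have : (∑ j : Fin n, ∑ m : Fin n, ginv x j m * nablaRic x i' j m)
        = A x i' * (∑ j : Fin n, ∑ m : Fin n, ginv x j m * Ric x j m)
          + B x i' * (∑ j : Fin n, ∑ m : Fin n, ginv x j m * g x j m) := by
      simp only [hrec, mul_add, Finset.sum_add_distrib, Finset.mul_sum]
      congr 1 <;> exact Finset.sum_congr rfl fun j _ => Finset.sum_congr rfl fun m _ => by ring
    rw [this, htr, ← hR]
    ring
  have hc := hCodazzi x l i k
  rw [hrec, hrec, hnR, hnR] at hc
  field_simp at hc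
  rw [hricsymm x l k, hricsymm x l i, hgsymm x l k, hgsymm x l i] at hc
  linear_combination hc
end
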